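/- Let f : X → Z be a dominant, equidimensional morphism of varieties with X normal, and let η : Z' → Z be the normalisation of Z. Then the induced morphism f' : X → Z' is again equidimensional. -/
import Mathlib


/-!
Statement 1: If `f : X → Z` is a dominant equidimensional morphism of varieties with `X`
normal and `η : Z' → Z` is the normalisation of `Z`, then the induced morphism
`f' : X → Z'` is again equidimensional.

Varieties are modelled as irreducible Noetherian topological spaces.  The normalisation
morphism is finite, hence has finite fibres; since `X` is normal, the dominant morphism
`f` factors as `f = η ∘ f'`.  Equidimensionality of relative dimension `d` means that
every fibre is of pure dimension `d` (every irreducible component has Krull dimension `d`).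
-/

/-- `T` is an irreducible component of the subset `S`: a maximal irreducible subset of `S`. -/
def IsIrredCompOf {X : Type*} [TopologicalSpace X] (T S : Set X) : Prop :=
  Maximal (fun t : Set X => t ⊆ S ∧ IsIrreducible t) T

/-- A subset `S` has pure dimension `d` if every irreducible component of `S` has
topological Krull dimension `d`. -/
def PureDim {X : Type*} [TopologicalSpace X] (S : Set X) (d : WithBot ℕ∞) : Prop :=
  ∀ T : Set X, IsIrredCompOf T S → topologicalKrullDim T = d

/-- Any irreducible subset of `S` is contained in a maximal irreducible subset of `S`. -/
theorem exists_isIrredCompOf_superset {X : Type*} [TopologicalSpace X] {S T : Set X}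
    (hTirr : IsIrreducible T) (hTS : T ⊆ S) :
    ∃ T' : Set X, IsIrredCompOf T' S ∧ T ⊆ T' := by
  obtain ⟨m, hTm, hm⟩ :=
    zorn_subset_nonempty { t : Set X | t ⊆ S ∧ IsIrreducible t }
      (fun c hc hcc hcne => by
        refine ⟨⋃₀ c, ⟨?_, ?_, ?_⟩, fun s hs => Set.subset_sUnion_of_mem hs⟩
        · exact Set.sUnion_subset fun s hs => (hc hs).1
        · obtain ⟨t, htc⟩ := hcne
          obtain ⟨y, hy⟩ := (hc htc).2.1
          exact ⟨y, Set.mem_sUnion_of_mem hy htc⟩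
        · rintro u v hu hv ⟨y, hy, hyu⟩ ⟨z, hz, hzv⟩
          obtain ⟨p, hpc, hyp⟩ := Set.mem_sUnion.1 hy
          obtain ⟨q, hqc, hzq⟩ := Set.mem_sUnion.1 hz
          rcases hcc.total hpc hqc with hpq | hqp
          · obtain ⟨w, hwq, hw⟩ := (hc hqc).2.2 u v hu hv ⟨y, hpq hyp, hyu⟩ ⟨z, hzq, hzv⟩
            exact ⟨w, Set.mem_sUnion_of_mem hwq hqc, hw⟩
          · obtain ⟨w, hwp, hw⟩ := (hc hpc).2.2 u v hu hv ⟨y, hyp, hyu⟩ ⟨z, hqp hzq, hzv⟩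
            exact ⟨w, Set.mem_sUnion_of_mem hwp hpc, hw⟩)
      T ⟨hTS, hTirr⟩
  exact ⟨m, hm, hTm⟩

theorem equidimensional_of_factor_through_normalisation
    {X Z Z' : Type*} [TopologicalSpace X] [TopologicalSpace Z] [TopologicalSpace Z']
    [IrreducibleSpace X] [IrreducibleSpace Z] [IrreducibleSpace Z'] [T1Space Z']
    [TopologicalSpace.NoetherianSpace X]
    (f : X → Z) (η : Z' → Z) (f' : X → Z')
    (hf : Continuous f) (hη : Continuous η) (hf' : Continuous f')
    (hdomf : DenseRange f)
    -- the normalisation morphism is finite and surjective: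
    (hηfin : ∀ z : Z, (η ⁻¹' {z}).Finite) (hηsurj : Function.Surjective η)
    -- `f` factors through the normalisation:
    (hfact : f = η ∘ f')
    (d : WithBot ℕ∞)
    -- `f` is equidimensional of relative dimension `d`:
    (hequidim : ∀ x : X, PureDim (f ⁻¹' {f x}) d) :
    -- then `f'` is equidimensional of relative dimension `d`:
    ∀ x : X, PureDim (f' ⁻¹' {f' x}) d := by
  intro x T hT
  classical
  obtain ⟨⟨hTsub, hTirr⟩, hTmax⟩ := hT
  have hsubf : f' ⁻¹' {f' x} ⊆ f ⁻¹' {f x} := by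
    intro y hy
    simp only [Set.mem_preimage, Set.mem_singleton_iff] at hy ⊢
    simp [hfact, hy]
  obtain ⟨T', hT'comp, hTT'⟩ := exists_isIrredCompOf_superset hTirr (hTsub.trans hsubf)
  have hT'sub := hT'comp.1.1
  have hT'irr := hT'comp.1.2
  -- the `f`-fibre is a finite union of closed `f'`-fibres
  have hfin : (η ⁻¹' {f x}).Finite := hηfin (f x)
  set Fs : Finset (Set X) := hfin.toFinset.image (fun z' => f' ⁻¹' {z'}) with hFs
  have hcover : T' ⊆ ⋃₀ ↑Fs := by
    intro y hy
    have hyf : f y = f x := hT'sub hy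
    refine Set.mem_sUnion.2 ⟨f' ⁻¹' {f' y}, ?_, rfl⟩
    simp only [hFs, Finset.coe_image, Set.mem_image, Finset.mem_coe, Set.Finite.coe_toFinset]
    exact ⟨f' y, by simpa [hfact] using hyf, rfl⟩
  have hclosed : ∀ z ∈ Fs, IsClosed z := by
    intro z hz
    simp only [hFs, Finset.mem_image] at hz
    obtain ⟨z', _, rfl⟩ := hz
    exact (isClosed_singleton).preimage hf'
  obtain ⟨z, hzFs, hT'z⟩ := (isIrreducible_iff_sUnion_isClosed.1 hT'irr) Fs hclosed hcover
  simp only [hFs, Finset.mem_image] at hzFs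
  obtain ⟨z', _, rfl⟩ := hzFs
  -- `T'` meets the `f'`-fibre of `x`, hence `z' = f' x`
  obtain ⟨y, hyT⟩ := hTirr.1
  have hz'eq : z' = f' x := by
    have h1 : f' y = z' := hT'z (hTT' hyT)
    have h2 : f' y = f' x := hTsub hyT
    rw [← h1, h2]
  rw [hz'eq] at hT'z
  -- maximality forces `T = T'`
  have hTeq : T = T' := Set.Subset.antisymm hTT' (hTmax ⟨hT'z, hT'irr⟩ hTT')
  rw [hTeq]
  exact hequidim x T' hT'comp
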